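/- arXiv:2103.04422 — 2 statements merged into one kernel-verified Lean document; each statement's English description precedes it below -/
import Mathlib

section
/- Let μ = Σ_{j,k=1}^N u_{j,k} δ_{(x₁^j, x₂^k)} with u_{j,k} = (1/√N) exp(2πi jk/N). Then for every (λ₁, λ₂) ∈ ℤ², the Fourier coefficient satisfies |∫ exp(-i(λ₁ t₁ + λ₂ t₂)) dμ| ≤ N. -/
/-!
Writing `a j = e^{-i l₁ x₁^j}` and `b k = e^{-i l₂ x₂^k}`, the Fourier coefficient is the
bilinear form `Σ_{j,k} u_{j,k} a_j b_k = Σ_j a_j (u b)_j`. The normalized DFT matrix `u` is unitary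
(orthogonality of the `N`-th roots of unity), so `‖u b‖₂ = ‖b‖₂`, and Cauchy–Schwarz bounds the
form by `‖a‖₂ ‖b‖₂ = √N · √N = N`, since all entries of `a` and `b` have modulus one.
-/

open Complex Finset ComplexConjugate

section UnitaryBound

variable {𝕜 : Type*} [RCLike 𝕜] {n : Type*} [Fintype n]

theorem EuclideanSpace.norm_sum_mul_le (a c : EuclideanSpace 𝕜 n) :
    ‖∑ j, a j * c j‖ ≤ ‖a‖ * ‖c‖ := by
  rw [EuclideanSpace.norm_eq, EuclideanSpace.norm_eq]
  calc ‖∑ j, a j * c j‖ ≤ ∑ j, ‖a j‖ * ‖c j‖ := by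
        simpa only [norm_mul] using norm_sum_le univ fun j => a j * c j
    _ ≤ _ := Real.sum_mul_le_sqrt_mul_sqrt _ _ _

theorem EuclideanSpace.norm_eq_sqrt_card {a : EuclideanSpace 𝕜 n} (ha : ∀ j, ‖a j‖ = 1) :
    ‖a‖ = √(Fintype.card n) := by
  simp [EuclideanSpace.norm_eq, ha]

variable [DecidableEq n]

theorem Matrix.norm_toEuclideanCLM_of_mem_unitaryGroup {U : Matrix n n 𝕜}
    (hU : U ∈ Matrix.unitaryGroup n 𝕜) (x : EuclideanSpace 𝕜 n) :
    ‖Matrix.toEuclideanCLM (n := n) (𝕜 := 𝕜) U x‖ = ‖x‖ :=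
  ContinuousLinearMap.norm_map_of_mem_unitary (Unitary.map_mem _ hU) x

theorem Matrix.norm_sum_sum_mul_le_of_mem_unitaryGroup {U : Matrix n n 𝕜}
    (hU : U ∈ Matrix.unitaryGroup n 𝕜) (a b : EuclideanSpace 𝕜 n) :
    ‖∑ j, ∑ k, U j k * a j * b k‖ ≤ ‖a‖ * ‖b‖ := by
  have hsum : ∑ j, ∑ k, U j k * a j * b k =
      ∑ j, a j * Matrix.toEuclideanCLM (n := n) (𝕜 := 𝕜) U b j := by
    simp only [Matrix.ofLp_toEuclideanCLM, Matrix.mulVec, dotProduct, mul_sum]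
    exact sum_congr rfl fun j _ => sum_congr rfl fun k _ => by ring
  rw [hsum, ← Matrix.norm_toEuclideanCLM_of_mem_unitaryGroup hU b]
  exact EuclideanSpace.norm_sum_mul_le a _

end UnitaryBound

theorem sum_range_pow_succ_of_pow_eq_one {R : Type*} [CommRing R] [IsDomain R] [DecidableEq R]
    {w : R} {N : ℕ} (hw : w ^ N = 1) :
    ∑ j ∈ range N, w ^ (j + 1) = if w = 1 then (N : R) else 0 := by
  split_ifs with h
  · simp [h]
  · have hgeom : (∑ j ∈ range N, w ^ j) * (w - 1) = 0 := by rw [geom_sum_mul, hw, sub_self]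
    simp only [pow_succ', ← mul_sum, (mul_eq_zero.mp hgeom).resolve_right (sub_ne_zero.mpr h),
      mul_zero]

noncomputable def dftMatrix (N : ℕ) : Matrix (Fin N) (Fin N) ℂ :=
  Matrix.of fun j k => (1 / Real.sqrt N) *
    Complex.exp (2 * Real.pi * Complex.I * ((j.1 : ℂ) + 1) * ((k.1 : ℂ) + 1) / N)

theorem dftMatrix_mul_conj {N : ℕ} (j k k' : Fin N) :
    dftMatrix N k j * conj (dftMatrix N k' j) =
      (N : ℂ)⁻¹ * (exp (2 * Real.pi * I / N) ^ ((k : ℤ) - k')) ^ (j.1 + 1) := by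
  have hsq : 1 / (√(N : ℝ) : ℂ) * (1 / (√(N : ℝ) : ℂ)) = (N : ℂ)⁻¹ := by
    rw [div_mul_div_comm, one_mul, ← ofReal_mul, Real.mul_self_sqrt (Nat.cast_nonneg N)]
    simp
  simp only [dftMatrix, Matrix.of_apply, map_mul, ← exp_conj, map_div₀, map_one, conj_ofReal]
  rw [mul_mul_mul_comm, hsq, ← exp_add, ← exp_int_mul, ← exp_nat_mul]
  congr 2
  simp only [map_ofNat, conj_I, map_add, map_natCast, map_one]
  push_cast
  ring

theorem dftMatrix_mem_unitaryGroup (N : ℕ) : dftMatrix N ∈ Matrix.unitaryGroup (Fin N) ℂ := by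
  rw [Matrix.mem_unitaryGroup_iff]
  ext k k'
  have hN : (N : ℂ) ≠ 0 := Nat.cast_ne_zero.mpr (Fin.pos k).ne'
  set ζ := exp (2 * Real.pi * I / N)
  have hζ : IsPrimitiveRoot ζ N := Complex.isPrimitiveRoot_exp N (Fin.pos k).ne'
  have hwN : (ζ ^ ((k : ℤ) - k')) ^ N = 1 := by
    rw [← zpow_natCast, ← zpow_mul, mul_comm _ (N : ℤ), zpow_mul, zpow_natCast, hζ.pow_eq_one,
      one_zpow]
  have hw : ζ ^ ((k : ℤ) - k') = 1 ↔ k = k' := by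
    rw [hζ.zpow_eq_one_iff_dvd, ← Nat.modEq_iff_dvd, eq_comm, ← Fin.val_inj]
    exact ⟨fun h => h.eq_of_lt_of_lt k'.2 k.2, fun h => h ▸ rfl⟩
  simp only [Matrix.mul_apply, Matrix.star_apply, RCLike.star_def, dftMatrix_mul_conj, ← mul_sum]
  rw [Fin.sum_univ_eq_sum_range (fun j => (ζ ^ ((k : ℤ) - k')) ^ (j + 1)),
    sum_range_pow_succ_of_pow_eq_one hwN, if_congr hw rfl rfl, Matrix.one_apply, mul_ite,
    inv_mul_cancel₀ hN, mul_zero]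

theorem fourierCoeff_dft_dirac_comb_le_general (N : ℕ)
    (x₁ x₂ : Fin N → AddCircle (2 * Real.pi))
    (u : Fin N → Fin N → ℂ)
    (hu : ∀ j k, u j k = (1 / Real.sqrt N) *
      Complex.exp (2 * Real.pi * Complex.I * ((j.1 : ℂ) + 1) * ((k.1 : ℂ) + 1) / N))
    (l₁ l₂ : ℤ) :
    ‖∑ j : Fin N, ∑ k : Fin N,
        u j k * fourier (-l₁) (x₁ j) * fourier (-l₂) (x₂ k)‖ ≤ N := by
  have hU : u ∈ Matrix.unitaryGroup (Fin N) ℂ := by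
    rw [show u = dftMatrix N from funext₂ hu]
    exact dftMatrix_mem_unitaryGroup N
  have hunit (l : ℤ) (x : Fin N → AddCircle (2 * Real.pi)) (j : Fin N) :
      ‖(WithLp.toLp 2 fun j => fourier l (x j) : EuclideanSpace ℂ (Fin N)) j‖ = 1 := by
    simp [fourier_apply, Circle.norm_coe]
  have hbound := Matrix.norm_sum_sum_mul_le_of_mem_unitaryGroup hU
    (WithLp.toLp 2 fun j => fourier (-l₁) (x₁ j)) (WithLp.toLp 2 fun k => fourier (-l₂) (x₂ k))
  rwa [EuclideanSpace.norm_eq_sqrt_card (hunit _ _), EuclideanSpace.norm_eq_sqrt_card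
    (hunit _ _), Fintype.card_fin, Real.mul_self_sqrt (Nat.cast_nonneg N)] at hbound

/-- For `μ = Σ_{j,k=1}^N u_{j,k} δ_{(x₁^j, x₂^k)}` with
`u_{j,k} = (1/√N) exp(2πi jk/N)`, every Fourier coefficient
`μ̂(l₁,l₂) = Σ_{j,k} u_{j,k} e^{-i l₁ x₁^j} e^{-i l₂ x₂^k}`
(without the `(2π)^{-2}` normalization) has absolute value at most `N`.
Here `e^{i n x}` for `x ∈ 𝕋 = ℝ/2πℤ` is `fourier n x`. -/
theorem fourierCoeff_dft_dirac_comb_le (N : ℕ) (hN : 0 < N)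
    (x₁ x₂ : Fin N → AddCircle (2 * Real.pi))
    (u : Fin N → Fin N → ℂ)
    (hu : ∀ j k, u j k = (1 / Real.sqrt N) *
      Complex.exp (2 * Real.pi * Complex.I * ((j.1 : ℂ) + 1) * ((k.1 : ℂ) + 1) / N))
    (l₁ l₂ : ℤ) :
    ‖∑ j : Fin N, ∑ k : Fin N,
        u j k * fourier (-l₁) (x₁ j) * fourier (-l₂) (x₂ k)‖ ≤ N :=
  fourierCoeff_dft_dirac_comb_le_general N x₁ x₂ u hu l₁ l₂
end

section
/- There is no constant C > 0 such that for all N and all finite complex measures μ of the form μ = Σ_{j,k=1}^N u_{j,k} δ_{(x₁^j, x₂^k)} with u_{j,k} = (1/√N) exp(2πi jk/N) and distinct points x₁^1,...,x₁^N and distinct x₂^1,...,x₂^N in 𝕋, one has ‖μ‖ ≤ C · sup_{λ ∈ ℤ²} |μ̂(λ)|. In particular, for every C > 0 there exists N with N^{3/2} > C · N. -/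
/-!
Put the points at the `N`-th roots of unity, `x^j = 2πj/N`, on both circles, and let
`ζ = e^{2πi/N}`. Then `√N · μ̂(λ₁, λ₂) = Σ_j ζ^{(j+1) - λ₁ j} Σ_k ζ^{k (j + 1 - λ₂)}`, and the inner
geometric sum is `N` if `j ≡ λ₂ - 1 (mod N)` and `0` otherwise. So exactly one row survives and
`|μ̂(λ)| = √N` for every `λ`, while `‖μ‖ = N² / √N`. A Helson constant `C` would force `N ≤ C`.
-/

open Complex Finset

theorem Finsupp.sum_sum_single_of_injective {ι α M N : Type*} [Fintype ι] [AddCommMonoid M]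
    [AddCommMonoid N] {p : ι → α} (hp : Function.Injective p) (c : ι → M) {g : α → M → N}
    (hg : ∀ a, g a 0 = 0) :
    (∑ i, Finsupp.single (p i) (c i)).sum g = ∑ i, g (p i) (c i) := by
  have hmap : ∑ i, Finsupp.single (p i) (c i) = (Finsupp.equivFunOnFinite.symm c).mapDomain p := by
    rw [Finsupp.mapDomain, Finsupp.sum_fintype _ _ fun _ => Finsupp.single_zero _]
    rfl
  rw [hmap, Finsupp.sum_mapDomain_index_inj hp, Finsupp.sum_fintype _ _ fun i => hg (p i)]
  rfl

theorem Finsupp.sum_norm_sum_sum_single_prod {ι κ α β E : Type*} [Fintype ι] [Fintype κ]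
    [SeminormedAddCommGroup E] {x : ι → α} {y : κ → β} (hx : Function.Injective x)
    (hy : Function.Injective y) (c : ι → κ → E) :
    ((∑ j, ∑ k, Finsupp.single (x j, y k) (c j k)).sum fun _ z => ‖z‖) = ∑ j, ∑ k, ‖c j k‖ := by
  have h := Finsupp.sum_sum_single_of_injective (hx.prodMap hy) (fun i => c i.1 i.2)
    (g := fun _ z => ‖z‖) fun _ => norm_zero
  simpa only [Prod.map, Fintype.sum_prod_type] using h

theorem IsPrimitiveRoot.sum_pow_zpow {K : Type*} [Field K] {ζ : K} {N : ℕ}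
    (hζ : IsPrimitiveRoot ζ N) (m : ℤ) :
    ∑ k ∈ range N, (ζ ^ m) ^ k = if (N : ℤ) ∣ m then (N : K) else 0 := by
  split_ifs with hm
  · simp [(hζ.zpow_eq_one_iff_dvd m).2 hm]
  · have hne : ζ ^ m ≠ 1 := fun h => hm ((hζ.zpow_eq_one_iff_dvd m).1 h)
    rw [geom_sum_eq hne, ← zpow_natCast, ← zpow_mul, mul_comm, zpow_mul, hζ.zpow_eq_one, one_zpow,
      sub_self, zero_div]

theorem Fin.exists_sum_ite_intCast_dvd_sub {M : Type*} [AddCommMonoid M] {N : ℕ} (hN : 0 < N)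
    (r : ℤ) (f : Fin N → M) :
    ∃ j₀ : Fin N, ∑ j : Fin N, (if (N : ℤ) ∣ j - r then f j else 0) = f j₀ := by
  have hN' : (0 : ℤ) < N := Int.natCast_pos.2 hN
  have hr₀ := Int.emod_nonneg r hN'.ne'
  have hr₁ := Int.emod_lt_of_pos r hN'
  let j₀ : Fin N := ⟨(r % N).toNat, by omega⟩
  have hdvd : ∀ j : Fin N, (N : ℤ) ∣ j - r ↔ j = j₀ := by
    intro j
    rw [← Int.modEq_iff_dvd, Int.ModEq, Int.emod_eq_of_lt (a := j) (by omega) (by omega),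
      Fin.ext_iff]
    simp only [j₀]
    omega
  refine ⟨j₀, ?_⟩
  simp_rw [hdvd]
  exact Fintype.sum_ite_eq' j₀ f

theorem IsPrimitiveRoot.exists_sum_sum_zpow_chirp {K : Type*} [Field K] {ζ : K} {N : ℕ}
    (hζ : IsPrimitiveRoot ζ N) (hN : 0 < N) (a b : ℤ) :
    ∃ m : ℤ, ∑ j : Fin N, ∑ k : Fin N, ζ ^ (((j : ℤ) + 1) * ((k : ℤ) + 1) + a * j + b * k)
      = N * ζ ^ m := by
  have hζ0 : ζ ≠ 0 := hζ.ne_zero hN.ne'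
  have hrow : ∀ j : Fin N, ∑ k : Fin N, ζ ^ (((j : ℤ) + 1) * ((k : ℤ) + 1) + a * j + b * k)
      = if (N : ℤ) ∣ j - (-1 - b) then N * ζ ^ ((j : ℤ) + 1 + a * j) else 0 := by
    intro j
    have hsplit : ∀ k : ℕ, ζ ^ (((j : ℤ) + 1) * ((k : ℤ) + 1) + a * j + b * k)
        = ζ ^ ((j : ℤ) + 1 + a * j) * (ζ ^ ((j : ℤ) + 1 + b)) ^ k := by
      intro k
      rw [← zpow_natCast, ← zpow_mul, ← zpow_add₀ hζ0]
      ring_nf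
    simp_rw [hsplit, ← mul_sum]
    rw [Fin.sum_univ_eq_sum_range (fun k => (ζ ^ ((j : ℤ) + 1 + b)) ^ k) N, hζ.sum_pow_zpow,
      show (j : ℤ) + 1 + b = j - (-1 - b) by ring]
    split_ifs <;> ring
  simp_rw [hrow]
  obtain ⟨j₀, hj₀⟩ := Fin.exists_sum_ite_intCast_dvd_sub hN (-1 - b)
    (fun j => (N : K) * ζ ^ ((j : ℤ) + 1 + a * j))
  exact ⟨_, hj₀⟩

noncomputable def chirp (N : ℕ) (j k : Fin N) : ℂ :=
  1 / Real.sqrt N * Complex.exp (2 * Real.pi * Complex.I * ((j.1 : ℂ) + 1) * ((k.1 : ℂ) + 1) / N)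

theorem chirp_eq_zpow (N : ℕ) (j k : Fin N) :
    chirp N j k
      = 1 / Real.sqrt N * exp (2 * Real.pi * I / N) ^ (((j : ℤ) + 1) * ((k : ℤ) + 1)) := by
  rw [chirp, ← exp_int_mul]
  push_cast
  ring_nf

theorem norm_chirp (N : ℕ) (j k : Fin N) : ‖chirp N j k‖ = 1 / Real.sqrt N := by
  rw [chirp, norm_mul, norm_exp]
  simp

theorem sum_sum_norm_chirp (N : ℕ) : ∑ j : Fin N, ∑ k : Fin N, ‖chirp N j k‖ = N * Real.sqrt N := by
  simp only [norm_chirp, sum_const, card_univ, Fintype.card_fin, nsmul_eq_mul]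
  rw [← mul_assoc, mul_one_div, mul_div_assoc, Real.div_sqrt]

noncomputable def equispaced (T : ℝ) (N : ℕ) (j : Fin N) : AddCircle T := (T * (j / N) : ℝ)

theorem injective_equispaced {T : ℝ} [hT : Fact (0 < T)] (N : ℕ) :
    Function.Injective (equispaced T N) := by
  have hmem : ∀ j : Fin N, T * (j / N) ∈ Set.Ico 0 (0 + T) := by
    intro j
    have hN : (0 : ℝ) < N := by exact_mod_cast j.pos
    have hj : (j : ℝ) < N := by exact_mod_cast j.2
    refine ⟨by have := hT.out; positivity, ?_⟩
    rw [zero_add]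
    exact mul_lt_of_lt_one_right hT.out ((div_lt_one hN).2 hj)
  intro j j' h
  have hjj' := (AddCircle.coe_eq_coe_iff_of_mem_Ico (hmem j) (hmem j')).1 h
  have hN : (N : ℝ) ≠ 0 := by exact_mod_cast j.pos.ne'
  rw [mul_right_inj' hT.out.ne', div_left_inj' hN] at hjj'
  exact Fin.ext (by exact_mod_cast hjj')

theorem fourier_equispaced {T : ℝ} (hT : T ≠ 0) (N : ℕ) (n : ℤ) (j : Fin N) :
    fourier n (equispaced T N j) = exp (2 * Real.pi * I / N) ^ (n * j) := by
  have hN : (N : ℂ) ≠ 0 := by exact_mod_cast j.pos.ne'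
  have hT' : (T : ℂ) ≠ 0 := by exact_mod_cast hT
  rw [equispaced, fourier_coe_apply, ← exp_int_mul]
  congr 1
  push_cast
  field_simp

theorem norm_sum_sum_chirp_mul_fourier_equispaced {T : ℝ} (hT : T ≠ 0) {N : ℕ} (hN : 0 < N)
    (l₁ l₂ : ℤ) :
    ‖∑ j : Fin N, ∑ k : Fin N,
      chirp N j k * fourier (-l₁) (equispaced T N j) * fourier (-l₂) (equispaced T N k)‖
      = Real.sqrt N := by
  set ζ := exp (2 * Real.pi * I / N)
  have hζ : IsPrimitiveRoot ζ N := isPrimitiveRoot_exp N hN.ne'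
  have hterm : ∀ j k : Fin N,
      chirp N j k * fourier (-l₁) (equispaced T N j) * fourier (-l₂) (equispaced T N k)
        = 1 / Real.sqrt N * ζ ^ (((j : ℤ) + 1) * ((k : ℤ) + 1) + -l₁ * j + -l₂ * k) := by
    intro j k
    rw [chirp_eq_zpow, fourier_equispaced hT, fourier_equispaced hT,
      zpow_add₀ (hζ.ne_zero hN.ne'), zpow_add₀ (hζ.ne_zero hN.ne')]
    ring
  obtain ⟨m, hm⟩ := hζ.exists_sum_sum_zpow_chirp hN (-l₁) (-l₂)
  simp_rw [hterm, ← mul_sum, hm, norm_mul, norm_zpow, hζ.norm'_eq_one hN.ne']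
  rw [norm_div, norm_one, Complex.norm_real, Real.norm_of_nonneg (Real.sqrt_nonneg _),
    Complex.norm_natCast, one_zpow, mul_one, one_div_mul_eq_div, Real.div_sqrt]

theorem exists_nat_rpow_three_halves_gt (C : ℝ) : ∃ N : ℕ, (N : ℝ) ^ ((3 : ℝ) / 2) > C * N := by
  have hsqrt := (tendsto_rpow_atTop (by norm_num : (0 : ℝ) < 1 / 2)).comp
    tendsto_natCast_atTop_atTop
  obtain ⟨N, hN, hC⟩ := (((tendsto_natCast_atTop_atTop (R := ℝ)).eventually_gt_atTop 0).and
    (hsqrt.eventually_gt_atTop C)).exists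
  refine ⟨N, ?_⟩
  rw [show (3 : ℝ) / 2 = 1 + 1 / 2 by norm_num, Real.rpow_add hN, Real.rpow_one, mul_comm C]
  exact mul_lt_mul_of_pos_left hC hN

/-- There is no constant `C > 0` such that for all `N ≥ 1` and all discrete complex
measures `μ = Σ_{j,k=1}^N u_{j,k} δ_{(x₁^j, x₂^k)}` on `𝕋²` with
`u_{j,k} = (1/√N) exp(2πi jk/N)` and distinct points `x₁^1,...,x₁^N` and distinct
`x₂^1,...,x₂^N`, one has `‖μ‖ ≤ C · sup_{λ ∈ ℤ²} |μ̂(λ)|`, where `‖μ‖` is the total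
variation (sum of absolute values of the coefficients) and
`μ̂(λ) = Σ_{j,k} u_{j,k} e^{-i λ₁ x₁^j} e^{-i λ₂ x₂^k}`.
In particular, for every `C > 0` there exists `N` with `N^{3/2} > C · N`. -/
theorem no_uniform_helson_constant_for_products :
    (¬ ∃ C : ℝ, 0 < C ∧ ∀ (N : ℕ), 0 < N →
      ∀ (x₁ x₂ : Fin N → AddCircle (2 * Real.pi)),
        Function.Injective x₁ → Function.Injective x₂ →
      ∀ (u : Fin N → Fin N → ℂ),
        (∀ j k, u j k = (1 / Real.sqrt N) *
          Complex.exp (2 * Real.pi * Complex.I * ((j.1 : ℂ) + 1) * ((k.1 : ℂ) + 1) / N)) →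
      ∀ (μ : (AddCircle (2 * Real.pi) × AddCircle (2 * Real.pi)) →₀ ℂ),
        μ = (∑ j : Fin N, ∑ k : Fin N, Finsupp.single (x₁ j, x₂ k) (u j k)) →
        (μ.sum fun _ z => ‖z‖) ≤ C * ⨆ l : ℤ × ℤ,
          ‖∑ j : Fin N, ∑ k : Fin N,
            u j k * fourier (-l.1) (x₁ j) * fourier (-l.2) (x₂ k)‖) ∧
    (∀ C : ℝ, 0 < C → ∃ N : ℕ, (N : ℝ) ^ ((3 : ℝ) / 2) > C * N) := by
  refine ⟨?_, fun C _ => exists_nat_rpow_three_halves_gt C⟩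
  rintro ⟨C, hC, H⟩
  obtain ⟨N, hCN⟩ := exists_nat_gt C
  have hN : 0 < N := by exact_mod_cast hC.trans hCN
  have hT : 0 < 2 * Real.pi := by positivity
  have : Fact (0 < 2 * Real.pi) := ⟨hT⟩
  have hx := injective_equispaced (T := 2 * Real.pi) N
  have hbound := H N hN _ _ hx hx (chirp N) (fun _ _ => rfl) _ rfl
  simp_rw [Finsupp.sum_norm_sum_sum_single_prod hx hx, sum_sum_norm_chirp,
    norm_sum_sum_chirp_mul_fourier_equispaced hT.ne' hN, ciSup_const] at hbound
  have hs : 0 < Real.sqrt N := Real.sqrt_pos.2 (by exact_mod_cast hN)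
  linarith [le_of_mul_le_mul_right hbound hs]
end
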